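/- (Exterior smash preserves pushouts along cofibrations.) Let Z be a retractive simplicial set over X₁, and let Y₁ ⟶ Y₂ and Y₁ ⟶ Y₀ be maps of retractive simplicial sets over X₂ such that the underlying map of Y₁ ⟶ Y₂ is a monomorphism. Then the canonical map (Z ⊼ Y₂) ⨿_{Z ⊼ Y₁} (Z ⊼ Y₀) ⟶ Z ⊼ (Y₂ ⨿_{Y₁} Y₀) is an isomorphism of retractive simplicial sets over X₁ ⨯ X₂, where the indicated pushouts of retractive simplicial sets are computed as pushouts of the underlying simplicial sets. -/

import Mathlib

open CategoryTheory CategoryTheory.Limits Simplicial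

universe u

/-- A retractive simplicial set over `X`. -/
structure Retr (X : SSet.{u}) where
  Y : SSet.{u}
  r : Y ⟶ X
  s : X ⟶ Y
  retr : s ≫ r = 𝟙 X

namespace Retr

attribute [local simp] pushout.inl_desc pushout.inr_desc pushout.inl_desc_assoc pushout.inr_desc_assoc

variable {X X₁ X₂ : SSet.{u}}

/-- The "wedge" `Y₁ ⨯ X₂ ∪_(X₁ ⨯ X₂) X₁ ⨯ Y₂`. -/
noncomputable def wedgeObj (W₁ : Retr X₁) (W₂ : Retr X₂) : SSet.{u} :=
  pushout (prod.map W₁.s (𝟙 X₂)) (prod.map (𝟙 X₁) W₂.s)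

/-- The canonical map from the wedge to the product. -/
noncomputable def wedgeToProd (W₁ : Retr X₁) (W₂ : Retr X₂) :
    wedgeObj W₁ W₂ ⟶ W₁.Y ⨯ W₂.Y :=
  pushout.desc (prod.map (𝟙 W₁.Y) W₂.s) (prod.map W₁.s (𝟙 W₂.Y))
    (by simp [prod.map_map])

/-- The map from the wedge to the base, induced by the retractions. -/
noncomputable def wedgeToBase (W₁ : Retr X₁) (W₂ : Retr X₂) :
    wedgeObj W₁ W₂ ⟶ X₁ ⨯ X₂ :=
  pushout.desc (prod.map W₁.r (𝟙 X₂)) (prod.map (𝟙 X₁) W₂.r)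
    (by simp [prod.map_map, W₁.retr, W₂.retr])

/-- The exterior smash product of retractive simplicial sets. -/
noncomputable def esmash (W₁ : Retr X₁) (W₂ : Retr X₂) : Retr (X₁ ⨯ X₂) where
  Y := pushout (wedgeToBase W₁ W₂) (wedgeToProd W₁ W₂)
  s := pushout.inl _ _
  r := pushout.desc (𝟙 _) (prod.map W₁.r W₂.r) (by
    unfold wedgeObj at *
    apply pushout.hom_ext <;>
      simp [wedgeToBase, wedgeToProd, prod.map_map, W₁.retr, W₂.retr])
  retr := by simp

/-- The canonical quotient map `Y₁ ⨯ Y₂ ⟶ Y₁ ⊼ Y₂`. -/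
noncomputable def esmashQuot (W₁ : Retr X₁) (W₂ : Retr X₂) :
    (W₁.Y ⨯ W₂.Y) ⟶ (esmash W₁ W₂).Y :=
  pushout.inr _ _

/-- Pushforward of a retractive simplicial set along a map of base simplicial sets. -/
noncomputable def pushf {X X' : SSet.{u}} (f : X ⟶ X') (W : Retr X) : Retr X' where
  Y := pushout W.s f
  s := pushout.inr _ _
  r := pushout.desc (W.r ≫ f) (𝟙 X') (by
    rw [← Category.assoc, W.retr, Category.id_comp, Category.comp_id])
  retr := by simp

/-- The internal smash product over a base with multiplication `μ`. -/
noncomputable def ismash (μ : X ⨯ X ⟶ X) (W₁ W₂ : Retr X) : Retr X :=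
  pushf μ (esmash W₁ W₂)

/-- The canonical quotient map `Y₁ ⨯ Y₂ ⟶ Y₁ ∧ Y₂`. -/
noncomputable def ismashQuot (μ : X ⨯ X ⟶ X) (W₁ W₂ : Retr X) :
    (W₁.Y ⨯ W₂.Y) ⟶ (ismash μ W₁ W₂).Y :=
  esmashQuot W₁ W₂ ≫ pushout.inl (esmash W₁ W₂).s μ

/-- Morphisms of retractive simplicial sets over a fixed base. -/
structure RHom {X : SSet.{u}} (W W' : Retr X) where
  f : W.Y ⟶ W'.Y
  hs : W.s ≫ f = W'.s
  hr : f ≫ W'.r = W.r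

/-- The identity morphism of a retractive simplicial set. -/
def RHom.id (W : Retr X) : RHom W W := ⟨𝟙 _, by simp, by simp⟩

/-- The map induced on wedges by a pair of morphisms of retractive simplicial sets. -/
noncomputable def wedgeMap {W₁ W₁' : Retr X₁} {W₂ W₂' : Retr X₂}
    (φ₁ : RHom W₁ W₁') (φ₂ : RHom W₂ W₂') : wedgeObj W₁ W₂ ⟶ wedgeObj W₁' W₂' :=
  pushout.map _ _ _ _ (prod.map φ₁.f (𝟙 X₂)) (prod.map (𝟙 X₁) φ₂.f) (𝟙 (X₁ ⨯ X₂))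
    (by simp [prod.map_map, φ₁.hs]) (by simp [prod.map_map, φ₂.hs])

/-- The map induced on exterior smash products by a pair of morphisms
of retractive simplicial sets. -/
noncomputable def esmashMap {W₁ W₁' : Retr X₁} {W₂ W₂' : Retr X₂}
    (φ₁ : RHom W₁ W₁') (φ₂ : RHom W₂ W₂') : RHom (esmash W₁ W₂) (esmash W₁' W₂') where
  f := pushout.map _ _ _ _ (𝟙 (X₁ ⨯ X₂)) (prod.map φ₁.f φ₂.f) (wedgeMap φ₁ φ₂)
    (by
      unfold wedgeObj at *
      apply pushout.hom_ext <;>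
        simp [wedgeMap, wedgeToBase, prod.map_map, φ₁.hr, φ₂.hr])
    (by
      unfold wedgeObj at *
      apply pushout.hom_ext <;>
        simp [wedgeMap, wedgeToProd, prod.map_map, φ₁.hs, φ₂.hs])
  hs := by simp [esmash]
  hr := by
    apply pushout.hom_ext <;>
      simp [esmash, prod.map_map, φ₁.hr, φ₂.hr]

/-- The map induced on pushforwards by a morphism of retractive simplicial sets. -/
noncomputable def pushfMap {X X' : SSet.{u}} (f : X ⟶ X') {W W' : Retr X}
    (φ : RHom W W') : RHom (pushf f W) (pushf f W') where
  f := pushout.map _ _ _ _ φ.f (𝟙 X') (𝟙 X) (by simp [φ.hs]) (by simp)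
  hs := by simp [pushf]
  hr := by
    apply pushout.hom_ext <;> simp [pushf, φ.hr]
    rw [← Category.assoc, φ.hr]

/-- The map induced on internal smash products by a pair of morphisms. -/
noncomputable def ismashMap (μ : X ⨯ X ⟶ X) {W₁ W₁' W₂ W₂' : Retr X}
    (φ₁ : RHom W₁ W₁') (φ₂ : RHom W₂ W₂') :
    RHom (ismash μ W₁ W₂) (ismash μ W₁' W₂') :=
  pushfMap μ (esmashMap φ₁ φ₂)

/-- The pushout of retractive simplicial sets along a pair of morphisms,
computed on underlying simplicial sets. -/
noncomputable def retrPushout {W₁ W₂ W₀ : Retr X} (u : RHom W₁ W₂) (v : RHom W₁ W₀) :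
    Retr X where
  Y := pushout u.f v.f
  s := W₂.s ≫ pushout.inl _ _
  r := pushout.desc W₂.r W₀.r (by rw [u.hr, v.hr])
  retr := by rw [Category.assoc, pushout.inl_desc, W₂.retr]

/-- The first structure map into the pushout of retractive simplicial sets. -/
noncomputable def pInl {W₁ W₂ W₀ : Retr X} (u : RHom W₁ W₂) (v : RHom W₁ W₀) :
    RHom W₂ (retrPushout u v) where
  f := pushout.inl _ _
  hs := rfl
  hr := by simp [retrPushout]

/-- The second structure map into the pushout of retractive simplicial sets. -/
noncomputable def pInr {W₁ W₂ W₀ : Retr X} (u : RHom W₁ W₂) (v : RHom W₁ W₀) :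
    RHom W₀ (retrPushout u v) where
  f := pushout.inr _ _
  hs := by
    show W₀.s ≫ pushout.inr u.f v.f = W₂.s ≫ pushout.inl u.f v.f
    rw [← u.hs, ← v.hs, Category.assoc, Category.assoc, pushout.condition]
  hr := by simp [retrPushout]

/-- The sum of retractive simplicial sets over `X`. -/
noncomputable def retrSum (Y₁ Y₂ : Retr X) : Retr X where
  Y := pushout Y₁.s Y₂.s
  s := Y₁.s ≫ pushout.inl _ _
  r := pushout.desc Y₁.r Y₂.r (by rw [Y₁.retr, Y₂.retr])
  retr := by rw [Category.assoc, pushout.inl_desc, Y₁.retr]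

/-- The first sum inclusion. -/
noncomputable def sumInl (Y₁ Y₂ : Retr X) : RHom Y₁ (retrSum Y₁ Y₂) where
  f := pushout.inl _ _
  hs := rfl
  hr := by simp [retrSum]

/-- The second sum inclusion. -/
noncomputable def sumInr (Y₁ Y₂ : Retr X) : RHom Y₂ (retrSum Y₁ Y₂) where
  f := pushout.inr _ _
  hs := pushout.condition.symm
  hr := by simp [retrSum]

end Retr

/-!
`Z ⊼ Y` is assembled from the products `Z.Y ⨯ Y`, `X₁ ⨯ Y` and objects not depending on `Y` by
two successive pushouts. In simplicial sets `A ⨯ −` preserves colimits (the category is cartesian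
closed), and pushouts commute with pushouts (`colim` over spans is a left adjoint), so `Z ⊼ −`
carries every pushout square, in particular the defining one of `W₂ ⨿_{W₁} W₀`, to a pushout
square.
-/

section PushoutOfPushouts

variable {C : Type*} [Category C] [HasPushouts C]

lemma colim_map_spanHomMk {A₁ B₁ C₁ A₂ B₂ C₂ : C}
    {f₁ : A₁ ⟶ B₁} {g₁ : A₁ ⟶ C₁} {f₂ : A₂ ⟶ B₂} {g₂ : A₂ ⟶ C₂}
    (a : A₁ ⟶ A₂) (b : B₁ ⟶ B₂) (c : C₁ ⟶ C₂) (hf : f₁ ≫ b = a ≫ f₂) (hg : g₁ ≫ c = a ≫ g₂) :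
    colim.map (spanHomMk (F := span f₁ g₁) (G := span f₂ g₂) a b c
        (by simpa using hf) (by simpa using hg)) =
      pushout.map f₁ g₁ f₂ g₂ b c a hf hg := by
  apply pushout.hom_ext
  · rw [pushout.inl_desc]; exact ι_colimMap _ _
  · rw [pushout.inr_desc]; exact ι_colimMap _ _

theorem IsPushout.pushout_map {A₁ B₁ C₁ A₂ B₂ C₂ A₀ B₀ C₀ A₃ B₃ C₃ : C}
    {f₁ : A₁ ⟶ B₁} {g₁ : A₁ ⟶ C₁} {f₂ : A₂ ⟶ B₂} {g₂ : A₂ ⟶ C₂}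
    {f₀ : A₀ ⟶ B₀} {g₀ : A₀ ⟶ C₀} {f₃ : A₃ ⟶ B₃} {g₃ : A₃ ⟶ C₃}
    {a₂ : A₁ ⟶ A₂} {b₂ : B₁ ⟶ B₂} {c₂ : C₁ ⟶ C₂}
    {a₀ : A₁ ⟶ A₀} {b₀ : B₁ ⟶ B₀} {c₀ : C₁ ⟶ C₀}
    {a₂₃ : A₂ ⟶ A₃} {b₂₃ : B₂ ⟶ B₃} {c₂₃ : C₂ ⟶ C₃}
    {a₀₃ : A₀ ⟶ A₃} {b₀₃ : B₀ ⟶ B₃} {c₀₃ : C₀ ⟶ C₃}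
    (hf₂ : f₁ ≫ b₂ = a₂ ≫ f₂) (hg₂ : g₁ ≫ c₂ = a₂ ≫ g₂)
    (hf₀ : f₁ ≫ b₀ = a₀ ≫ f₀) (hg₀ : g₁ ≫ c₀ = a₀ ≫ g₀)
    (hf₂₃ : f₂ ≫ b₂₃ = a₂₃ ≫ f₃) (hg₂₃ : g₂ ≫ c₂₃ = a₂₃ ≫ g₃)
    (hf₀₃ : f₀ ≫ b₀₃ = a₀₃ ≫ f₃) (hg₀₃ : g₀ ≫ c₀₃ = a₀₃ ≫ g₃)
    (hA : IsPushout a₂ a₀ a₂₃ a₀₃) (hB : IsPushout b₂ b₀ b₂₃ b₀₃)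
    (hC : IsPushout c₂ c₀ c₂₃ c₀₃) :
    IsPushout (pushout.map f₁ g₁ f₂ g₂ b₂ c₂ a₂ hf₂ hg₂)
      (pushout.map f₁ g₁ f₀ g₀ b₀ c₀ a₀ hf₀ hg₀)
      (pushout.map f₂ g₂ f₃ g₃ b₂₃ c₂₃ a₂₃ hf₂₃ hg₂₃)
      (pushout.map f₀ g₀ f₃ g₃ b₀₃ c₀₃ a₀₃ hf₀₃ hg₀₃) := by
  have hspans : IsPushout
      (spanHomMk (F := span f₁ g₁) (G := span f₂ g₂) a₂ b₂ c₂
        (by simpa using hf₂) (by simpa using hg₂))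
      (spanHomMk (F := span f₁ g₁) (G := span f₀ g₀) a₀ b₀ c₀
        (by simpa using hf₀) (by simpa using hg₀))
      (spanHomMk (F := span f₂ g₂) (G := span f₃ g₃) a₂₃ b₂₃ c₂₃
        (by simpa using hf₂₃) (by simpa using hg₂₃))
      (spanHomMk (F := span f₀ g₀) (G := span f₃ g₃) a₀₃ b₀₃ c₀₃
        (by simpa using hf₀₃) (by simpa using hg₀₃)) :=
    IsPushout.of_forall_isPushout_app (by rintro (_ | _ | _); exacts [hA, hB, hC])
  have := colim.map_isPushout hspans
  rwa [colim_map_spanHomMk, colim_map_spanHomMk, colim_map_spanHomMk,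
    colim_map_spanHomMk] at this

end PushoutOfPushouts

namespace Retr

section Naturality

variable {X₁ X₂ : SSet.{u}} {W₁ W₁' : Retr X₁} {W₂ W₂' : Retr X₂}
  (φ₁ : RHom W₁ W₁') (φ₂ : RHom W₂ W₂')

@[simp]
lemma wedgeMap_wedgeToBase : wedgeMap φ₁ φ₂ ≫ wedgeToBase W₁' W₂' = wedgeToBase W₁ W₂ := by
  unfold wedgeObj
  apply pushout.hom_ext <;>
    simp only [wedgeMap, wedgeToBase, pushout.inl_desc, pushout.inr_desc, pushout.inl_desc_assoc,
      pushout.inr_desc_assoc, Category.assoc, prod.map_map, φ₁.hr, φ₂.hr, Category.comp_id]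

@[simp]
lemma wedgeMap_wedgeToProd :
    wedgeMap φ₁ φ₂ ≫ wedgeToProd W₁' W₂' = wedgeToProd W₁ W₂ ≫ prod.map φ₁.f φ₂.f := by
  unfold wedgeObj
  apply pushout.hom_ext <;>
    simp only [wedgeMap, wedgeToProd, pushout.inl_desc, pushout.inr_desc, pushout.inl_desc_assoc,
      pushout.inr_desc_assoc, Category.assoc, prod.map_map, φ₁.hs, φ₂.hs, Category.comp_id,
      Category.id_comp]

end Naturality

variable {X₁ X₂ : SSet.{u}} (Z : Retr X₁) {W₁ W₂ W₀ W₃ : Retr X₂}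
  {u : RHom W₁ W₂} {v : RHom W₁ W₀} {u' : RHom W₂ W₃} {v' : RHom W₀ W₃}

lemma isPushout_wedgeMap_id (h : IsPushout u.f v.f u'.f v'.f) :
    IsPushout (wedgeMap (RHom.id Z) u) (wedgeMap (RHom.id Z) v)
      (wedgeMap (RHom.id Z) u') (wedgeMap (RHom.id Z) v') := by
  refine IsPushout.pushout_map ?_ ?_ ?_ ?_ ?_ ?_ ?_ ?_ (IsPushout.of_id_fst (f := 𝟙 _))
    (by simpa only [RHom.id, prod.map_id_id] using IsPushout.of_id_fst (f := 𝟙 (Z.Y ⨯ X₂)))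
    ((prod.functor.obj X₁).map_isPushout h) <;>
    simp [RHom.id, prod.map_map, RHom.hs]

lemma isPushout_esmashMap_id (h : IsPushout u.f v.f u'.f v'.f) :
    IsPushout (esmashMap (RHom.id Z) u).f (esmashMap (RHom.id Z) v).f
      (esmashMap (RHom.id Z) u').f (esmashMap (RHom.id Z) v').f := by
  refine IsPushout.pushout_map ?_ ?_ ?_ ?_ ?_ ?_ ?_ ?_ (isPushout_wedgeMap_id Z h)
    (IsPushout.of_id_fst (f := 𝟙 _)) ((prod.functor.obj Z.Y).map_isPushout h) <;>
    simp

end Retr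

open Retr

theorem esmash_preserves_pushout_general {X₁ X₂ : SSet} (Z : Retr X₁) {W₁ W₂ W₀ : Retr X₂}
    (u : RHom W₁ W₂) (v : RHom W₁ W₀) :
    IsPushout (esmashMap (RHom.id Z) u).f (esmashMap (RHom.id Z) v).f
      (esmashMap (RHom.id Z) (pInl u v)).f (esmashMap (RHom.id Z) (pInr u v)).f :=
  isPushout_esmashMap_id Z (IsPushout.of_hasPushout u.f v.f)

/-- **Exterior smash preserves pushouts along cofibrations.**  Let `Z` be a retractive
simplicial set over `X₁`, and let `u : W₁ ⟶ W₂` and `v : W₁ ⟶ W₀` be maps of retractive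
simplicial sets over `X₂` with the underlying map of `u` a monomorphism.  Then applying
`Z ⊼ −` to the pushout square of `u` and `v` (computed on underlying simplicial sets)
again yields a pushout square; equivalently, the canonical map
`(Z ⊼ W₂) ⨿_{Z ⊼ W₁} (Z ⊼ W₀) ⟶ Z ⊼ (W₂ ⨿_{W₁} W₀)` is an isomorphism. -/
theorem esmash_preserves_pushout {X₁ X₂ : SSet} (Z : Retr X₁) {W₁ W₂ W₀ : Retr X₂}
    (u : RHom W₁ W₂) (v : RHom W₁ W₀) (hu : Mono u.f) :
    IsPushout (esmashMap (RHom.id Z) u).f (esmashMap (RHom.id Z) v).f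
      (esmashMap (RHom.id Z) (pInl u v)).f (esmashMap (RHom.id Z) (pInr u v)).f :=
  esmash_preserves_pushout_general Z u v
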